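/- arXiv:2510.14735 — 2 statements merged into one kernel-verified Lean document; each statement's English description precedes it below -/
import Mathlib

section
/- For any two unit quaternions p₁, p₂ ∈ Sp(1), there exists a quaternion q with q² = -1 such that q p₁ q⁻¹ = p₁⁻¹ and q p₂ q⁻¹ = p₂⁻¹. -/
/-!
Three vectors `1, p₁, p₂` cannot span the four-dimensional space `ℍ`, so some unit quaternion `q`
is orthogonal to all of them. Orthogonality to `1` makes `q` purely imaginary, hence `q² = -1`
and `q⁻¹ = -q`; orthogonality to `p` says `p q̄ + q p̄ = 2 Re (p q̄) = 0`, i.e. `p q = q p̄`, so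
conjugation by `q` sends `p` to `p̄`, which is `p⁻¹` for a unit quaternion.
-/

open Module Quaternion
open scoped RealInnerProductSpace

theorem exists_norm_eq_one_forall_inner_eq_zero {𝕜 E : Type*} [RCLike 𝕜] [NormedAddCommGroup E]
    [InnerProductSpace 𝕜 E] [FiniteDimensional 𝕜 E] (s : Finset E) (hs : s.card < finrank 𝕜 E) :
    ∃ v : E, ‖v‖ = 1 ∧ ∀ u ∈ s, inner 𝕜 u v = 0 := by
  set K := Submodule.span 𝕜 (s : Set E)
  have hK : K ≠ ⊤ := (span_lt_top_of_card_lt_finrank (by simpa using hs)).ne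
  obtain ⟨v, hvK, hv⟩ := Submodule.exists_mem_ne_zero_of_ne_bot
    (mt Submodule.orthogonal_eq_bot_iff.mp hK)
  refine ⟨(‖v‖⁻¹ : 𝕜) • v, norm_smul_inv_norm hv, fun u hu => ?_⟩
  rw [inner_smul_right, (Submodule.mem_orthogonal K v).mp hvK u (Submodule.subset_span hu),
    mul_zero]

namespace Quaternion

section CommRing

variable {R : Type*} [CommRing R] {p q : ℍ[R]}

theorem star_eq_neg_of_re_eq_zero (hre : q.re = 0) : star q = -q := by
  rw [star_eq_two_re_sub, hre, mul_zero, coe_zero, zero_sub]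

theorem mul_star_add_mul_star (p q : ℍ[R]) : p * star q + q * star p = 2 * (p * star q).re := by
  rw [← star_mul_star p q, self_add_star]

theorem mul_self_eq_neg_one (hre : q.re = 0) (hq : normSq q = 1) : q * q = -1 := by
  calc q * q = -(q * star q) := by rw [star_eq_neg_of_re_eq_zero hre, mul_neg, neg_neg]
    _ = -1 := by rw [self_mul_star, hq, coe_one]

theorem mul_eq_mul_star (hre : q.re = 0) (hpq : (p * star q).re = 0) : p * q = q * star p := by
  have h := mul_star_add_mul_star p q
  rwa [hpq, coe_zero, mul_zero, star_eq_neg_of_re_eq_zero hre, mul_neg, neg_add_eq_zero] at h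

end CommRing

section Field

variable {R : Type*} [Field R] {p q : ℍ[R]}

theorem inv_eq_star (hp : normSq p = 1) : p⁻¹ = star p := by
  rw [inv_def, hp, inv_one, one_smul]

theorem mul_mul_inv_eq_star (hre : q.re = 0) (hq : normSq q = 1) (hpq : (p * star q).re = 0) :
    q * p * q⁻¹ = star p := by
  have hqinv : q⁻¹ = -q := by rw [inv_eq_star hq, star_eq_neg_of_re_eq_zero hre]
  rw [hqinv, mul_neg, mul_assoc, mul_eq_mul_star hre hpq, ← mul_assoc, mul_self_eq_neg_one hre hq,
    neg_one_mul, neg_neg]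

end Field

theorem normSq_eq_one_of_norm_eq_one {p : ℍ} (hp : ‖p‖ = 1) : normSq p = 1 := by
  rw [normSq_eq_norm_mul_self, hp, one_mul]

end Quaternion

theorem stmt_8 (p₁ p₂ : Quaternion ℝ) (h₁ : ‖p₁‖ = 1) (h₂ : ‖p₂‖ = 1) :
    ∃ q : Quaternion ℝ, q * q = -1 ∧ q * p₁ * q⁻¹ = p₁⁻¹ ∧ q * p₂ * q⁻¹ = p₂⁻¹ := by
  classical
  obtain ⟨q, hq, horth⟩ := exists_norm_eq_one_forall_inner_eq_zero (𝕜 := ℝ) {1, p₁, p₂}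
    (Finset.card_le_three.trans_lt (by rw [finrank_eq_four (R := ℝ)]; norm_num))
  have hre : q.re = 0 := by simpa [inner_def] using horth 1 (by simp)
  have hnq := normSq_eq_one_of_norm_eq_one hq
  have conj_eq_inv (p : ℍ) (hp : ‖p‖ = 1) (hpq : ⟪p, q⟫ = 0) : q * p * q⁻¹ = p⁻¹ := by
    rw [inv_eq_star (normSq_eq_one_of_norm_eq_one hp)]
    exact mul_mul_inv_eq_star hre hnq (inner_def p q ▸ hpq)
  exact ⟨q, mul_self_eq_neg_one hre hnq, conj_eq_inv p₁ h₁ (horth p₁ (by simp)),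
    conj_eq_inv p₂ h₂ (horth p₂ (by simp))⟩
end

section
/- Let H₁ be the 2×2 quaternionic Hermitian form with matrix [[0,1],[1,0]], and let A = diag(r e^{iθ}, r⁻¹ e^{iθ}) with 0 < r < 1 and e^{iθ} = cos θ + (sin θ) i, θ ∈ (0, π). If C ∈ Sp(1,1) satisfies C A C⁻¹ = A⁻¹, then C has zero diagonal entries and is of the form C = [[0, b j],[b̄⁻¹ j, 0]] for some nonzero complex number b; in particular C² = -I. -/
/-- `e^{iθ} = cos θ + (sin θ) i` inside Hamilton's quaternions. -/
noncomputable def expI (θ : ℝ) : Quaternion ℝ := ⟨Real.cos θ, Real.sin θ, 0, 0⟩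

/-- The quaternion unit `j`. -/
noncomputable def quatJ : Quaternion ℝ := ⟨0, 0, 1, 0⟩

private noncomputable def mkq (a b : ℝ) : Quaternion ℝ := ⟨a, b, 0, 0⟩

private lemma mkq_re (a b : ℝ) : (mkq a b).re = a := rfl
private lemma mkq_imI (a b : ℝ) : (mkq a b).imI = b := rfl
private lemma mkq_imJ (a b : ℝ) : (mkq a b).imJ = 0 := rfl
private lemma mkq_imK (a b : ℝ) : (mkq a b).imK = 0 := rfl
private lemma quatJ_re : quatJ.re = 0 := rfl
private lemma quatJ_imI : quatJ.imI = 0 := rfl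
private lemma quatJ_imJ : quatJ.imJ = 1 := rfl
private lemma quatJ_imK : quatJ.imK = 0 := rfl

private lemma mkq_star (a b : ℝ) : star (mkq a b) = mkq a (-b) := by
  apply Quaternion.ext <;>
    simp [mkq_re, mkq_imI, mkq_imJ, mkq_imK]

private lemma aux_wx (k m w x : ℝ) (hm : 0 < m) (f1 : k * w = m * x)
    (f2 : m * w = -(k * x)) : w = 0 ∧ x = 0 := by
  have hw : w * (m ^ 2 + k ^ 2) = 0 := by linear_combination m * f2 + k * f1
  have hmk : 0 < m ^ 2 + k ^ 2 := by nlinarith [sq_nonneg k, mul_pos hm hm]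
  have hw0 : w = 0 := by
    rcases mul_eq_zero.mp hw with h | h
    · exact h
    · exact absurd h hmk.ne'
  have hmx : m * x = 0 := by rw [← f1, hw0, mul_zero]
  refine ⟨hw0, ?_⟩
  rcases mul_eq_zero.mp hmx with h | h
  · exact absurd h hm.ne'
  · exact h

private lemma aux_yz (c s y z : ℝ) (hs : 0 < s) (hcs : c ^ 2 + s ^ 2 = 1)
    (f1 : c * y + s * z = 0) (f2 : c * z - s * y = 0) : y = 0 ∧ z = 0 := by
  have hy : y = 0 := by linear_combination c * f1 - s * f2 - y * hcs
  rw [hy] at f1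
  have hz : s * z = 0 := by linarith
  refine ⟨hy, ?_⟩
  rcases mul_eq_zero.mp hz with h | h
  · exact absurd h hs.ne'
  · exact h

theorem stmt_17 (r θ : ℝ) (hr0 : 0 < r) (hr1 : r < 1) (hθ0 : 0 < θ) (hθπ : θ < Real.pi)
    (C : Matrix (Fin 2) (Fin 2) (Quaternion ℝ))
    -- `C` preserves the Hermitian form with matrix `[[0,1],[1,0]]`, i.e. `C ∈ Sp(1,1)`
    (hC : C.conjTranspose * !![0, 1; 1, 0] * C = !![0, 1; 1, 0])
    -- `C A C⁻¹ = A⁻¹` for `A = diag(r e^{iθ}, r⁻¹ e^{iθ})`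
    (hconj : C * !![(r : Quaternion ℝ) * expI θ, 0; 0, (r⁻¹ : ℝ) * expI θ] =
      !![(r⁻¹ : ℝ) * expI (-θ), 0; 0, (r : Quaternion ℝ) * expI (-θ)] * C) :
    ∃ b : Quaternion ℝ, b.imJ = 0 ∧ b.imK = 0 ∧ b ≠ 0 ∧
      C = !![0, b * quatJ; (star b)⁻¹ * quatJ, 0] ∧ C * C = -1 := by
  have hs : 0 < Real.sin θ := Real.sin_pos_of_pos_of_lt_pi hθ0 hθπ
  have hrne : r ≠ 0 := ne_of_gt hr0
  have hri : 0 < r⁻¹ := inv_pos.mpr hr0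
  have hcs : Real.cos θ ^ 2 + Real.sin θ ^ 2 = 1 := Real.cos_sq_add_sin_sq θ
  have hrr : r < r⁻¹ := by nlinarith [mul_inv_cancel₀ hrne]
  have hkne : r - r⁻¹ ≠ 0 := ne_of_lt (by linarith)
  have hmpos : 0 < (r + r⁻¹) * Real.sin θ := by positivity
  -- entry (0,0)
  have h00 := congrFun (congrFun hconj 0) 0
  simp [Matrix.mul_apply, Fin.sum_univ_two] at h00
  rw [Quaternion.ext_iff] at h00
  obtain ⟨e1, e2, e3, e4⟩ := h00
  simp only [Quaternion.re_mul, Quaternion.imI_mul, Quaternion.imJ_mul, Quaternion.imK_mul,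
    ← Quaternion.coe_inv, Quaternion.re_coe, Quaternion.imI_coe, Quaternion.imJ_coe,
    Quaternion.imK_coe, Real.cos_neg, Real.sin_neg, zero_mul, mul_zero, sub_zero, add_zero,
    zero_add, neg_zero, zero_sub, neg_neg, neg_mul, mul_neg] at e1 e2 e3 e4
  simp only [expI, Quaternion.re_mul, Quaternion.imI_mul, Quaternion.imJ_mul, Quaternion.imK_mul,
    ← Quaternion.coe_inv, Quaternion.re_coe, Quaternion.imI_coe, Quaternion.imJ_coe,
    Quaternion.imK_coe, Real.cos_neg, Real.sin_neg, zero_mul, mul_zero, sub_zero, add_zero,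
    zero_add, neg_zero, zero_sub, neg_neg, neg_mul, mul_neg] at e1 e2 e3 e4
  have f1 : ((r - r⁻¹) * Real.cos θ) * (C 0 0).re
      = ((r + r⁻¹) * Real.sin θ) * (C 0 0).imI := by linear_combination e1
  have f2 : ((r + r⁻¹) * Real.sin θ) * (C 0 0).re
      = -(((r - r⁻¹) * Real.cos θ) * (C 0 0).imI) := by linear_combination e2
  obtain ⟨hw00, hx00⟩ := aux_wx _ _ _ _ hmpos f1 f2
  have g3 : (r - r⁻¹) * (Real.cos θ * (C 0 0).imJ + Real.sin θ * (C 0 0).imK) = 0 := by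
    linear_combination e3
  have g4 : (r - r⁻¹) * (Real.cos θ * (C 0 0).imK - Real.sin θ * (C 0 0).imJ) = 0 := by
    linear_combination e4
  obtain ⟨hy00, hz00⟩ := aux_yz (Real.cos θ) (Real.sin θ) _ _ hs hcs
    ((mul_eq_zero.mp g3).resolve_left hkne) ((mul_eq_zero.mp g4).resolve_left hkne)
  have hC00 : C 0 0 = 0 := by
    apply Quaternion.ext <;> simp [hw00, hx00, hy00, hz00, Quaternion.re_zero, Quaternion.imI_zero, Quaternion.imJ_zero, Quaternion.imK_zero]
  -- entry (1,1)
  have h11 := congrFun (congrFun hconj 1) 1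
  simp [Matrix.mul_apply, Fin.sum_univ_two] at h11
  rw [Quaternion.ext_iff] at h11
  obtain ⟨e1', e2', e3', e4'⟩ := h11
  simp only [Quaternion.re_mul, Quaternion.imI_mul, Quaternion.imJ_mul, Quaternion.imK_mul,
    ← Quaternion.coe_inv, Quaternion.re_coe, Quaternion.imI_coe, Quaternion.imJ_coe,
    Quaternion.imK_coe, Real.cos_neg, Real.sin_neg, zero_mul, mul_zero, sub_zero, add_zero,
    zero_add, neg_zero, zero_sub, neg_neg, neg_mul, mul_neg] at e1' e2' e3' e4'
  simp only [expI, Quaternion.re_mul, Quaternion.imI_mul, Quaternion.imJ_mul, Quaternion.imK_mul,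
    ← Quaternion.coe_inv, Quaternion.re_coe, Quaternion.imI_coe, Quaternion.imJ_coe,
    Quaternion.imK_coe, Real.cos_neg, Real.sin_neg, zero_mul, mul_zero, sub_zero, add_zero,
    zero_add, neg_zero, zero_sub, neg_neg, neg_mul, mul_neg] at e1' e2' e3' e4'
  have f1' : ((r⁻¹ - r) * Real.cos θ) * (C 1 1).re
      = ((r + r⁻¹) * Real.sin θ) * (C 1 1).imI := by linear_combination e1'
  have f2' : ((r + r⁻¹) * Real.sin θ) * (C 1 1).re
      = -(((r⁻¹ - r) * Real.cos θ) * (C 1 1).imI) := by linear_combination e2'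
  obtain ⟨hw11, hx11⟩ := aux_wx _ _ _ _ hmpos f1' f2'
  have g3' : (r - r⁻¹) * (Real.cos θ * (C 1 1).imJ + Real.sin θ * (C 1 1).imK) = 0 := by
    linear_combination -e3'
  have g4' : (r - r⁻¹) * (Real.cos θ * (C 1 1).imK - Real.sin θ * (C 1 1).imJ) = 0 := by
    linear_combination -e4'
  obtain ⟨hy11, hz11⟩ := aux_yz (Real.cos θ) (Real.sin θ) _ _ hs hcs
    ((mul_eq_zero.mp g3').resolve_left hkne) ((mul_eq_zero.mp g4').resolve_left hkne)
  have hC11 : C 1 1 = 0 := by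
    apply Quaternion.ext <;> simp [hw11, hx11, hy11, hz11, Quaternion.re_zero, Quaternion.imI_zero, Quaternion.imJ_zero, Quaternion.imK_zero]
  -- entry (0,1) : C 0 1 has zero re and imI parts
  have h01 := congrFun (congrFun hconj 0) 1
  simp [Matrix.mul_apply, Fin.sum_univ_two] at h01
  rw [Quaternion.ext_iff] at h01
  obtain ⟨p1, p2, -, -⟩ := h01
  simp only [Quaternion.re_mul, Quaternion.imI_mul, Quaternion.imJ_mul, Quaternion.imK_mul,
    ← Quaternion.coe_inv, Quaternion.re_coe, Quaternion.imI_coe, Quaternion.imJ_coe,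
    Quaternion.imK_coe, Real.cos_neg, Real.sin_neg, zero_mul, mul_zero, sub_zero, add_zero,
    zero_add, neg_zero, zero_sub, neg_neg, neg_mul, mul_neg] at p1 p2
  simp only [expI, Quaternion.re_mul, Quaternion.imI_mul, Quaternion.imJ_mul, Quaternion.imK_mul,
    ← Quaternion.coe_inv, Quaternion.re_coe, Quaternion.imI_coe, Quaternion.imJ_coe,
    Quaternion.imK_coe, Real.cos_neg, Real.sin_neg, zero_mul, mul_zero, sub_zero, add_zero,
    zero_add, neg_zero, zero_sub, neg_neg, neg_mul, mul_neg] at p1 p2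
  have hp2s : 0 < 2 * r⁻¹ * Real.sin θ := by positivity
  have hpI : (C 0 1).imI = 0 := by
    have h : (2 * r⁻¹ * Real.sin θ) * (C 0 1).imI = 0 := by linear_combination -p1
    rcases mul_eq_zero.mp h with h' | h'
    · exact absurd h' hp2s.ne'
    · exact h'
  have hpre : (C 0 1).re = 0 := by
    have h : (2 * r⁻¹ * Real.sin θ) * (C 0 1).re = 0 := by linear_combination p2
    rcases mul_eq_zero.mp h with h' | h'
    · exact absurd h' hp2s.ne'
    · exact h'
  -- entry (1,0) : C 1 0 has zero re and imI parts
  have h10 := congrFun (congrFun hconj 1) 0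
  simp [Matrix.mul_apply, Fin.sum_univ_two] at h10
  rw [Quaternion.ext_iff] at h10
  obtain ⟨q1, q2, -, -⟩ := h10
  simp only [Quaternion.re_mul, Quaternion.imI_mul, Quaternion.imJ_mul, Quaternion.imK_mul,
    ← Quaternion.coe_inv, Quaternion.re_coe, Quaternion.imI_coe, Quaternion.imJ_coe,
    Quaternion.imK_coe, Real.cos_neg, Real.sin_neg, zero_mul, mul_zero, sub_zero, add_zero,
    zero_add, neg_zero, zero_sub, neg_neg, neg_mul, mul_neg] at q1 q2
  simp only [expI, Quaternion.re_mul, Quaternion.imI_mul, Quaternion.imJ_mul, Quaternion.imK_mul,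
    ← Quaternion.coe_inv, Quaternion.re_coe, Quaternion.imI_coe, Quaternion.imJ_coe,
    Quaternion.imK_coe, Real.cos_neg, Real.sin_neg, zero_mul, mul_zero, sub_zero, add_zero,
    zero_add, neg_zero, zero_sub, neg_neg, neg_mul, mul_neg] at q1 q2
  have hq2s : 0 < 2 * r * Real.sin θ := by positivity
  have hqI : (C 1 0).imI = 0 := by
    have h : (2 * r * Real.sin θ) * (C 1 0).imI = 0 := by linear_combination -q1
    rcases mul_eq_zero.mp h with h' | h'
    · exact absurd h' hq2s.ne'
    · exact h'
  have hqre : (C 1 0).re = 0 := by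
    have h : (2 * r * Real.sin θ) * (C 1 0).re = 0 := by linear_combination q2
    rcases mul_eq_zero.mp h with h' | h'
    · exact absurd h' hq2s.ne'
    · exact h'
  -- the form condition : star (C 1 0) * C 0 1 = 1
  have hF := congrFun (congrFun hC 0) 1
  simp [Matrix.mul_apply, Fin.sum_univ_two, Matrix.conjTranspose_apply, hC00, hC11] at hF
  rw [Quaternion.ext_iff] at hF
  obtain ⟨G1, G2, -, -⟩ := hF
  simp only [Quaternion.re_mul, Quaternion.imI_mul, Quaternion.imJ_mul, Quaternion.imK_mul,
    Quaternion.re_star, Quaternion.imI_star, Quaternion.imJ_star, Quaternion.imK_star,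
    Quaternion.re_one, Quaternion.imI_one, hpre, hpI, hqre, hqI, zero_mul, mul_zero,
    sub_zero, add_zero, zero_add, neg_zero, zero_sub, neg_neg, neg_mul, mul_neg] at G1 G2
  have G1' : (C 1 0).imJ * (C 0 1).imJ + (C 1 0).imK * (C 0 1).imK = 1 := by
    linear_combination G1
  have G2' : (C 1 0).imK * (C 0 1).imJ - (C 1 0).imJ * (C 0 1).imK = 0 := by
    linear_combination G2
  -- define b
  have hbne : mkq ((C 0 1).imJ) ((C 0 1).imK) ≠ 0 := by
    intro h
    have hj := congrArg QuaternionAlgebra.re h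
    have hk := congrArg QuaternionAlgebra.imI h
    simp only [mkq_re, mkq_imI, Quaternion.re_zero, Quaternion.imI_zero] at hj hk
    rw [hj, hk] at G1'
    simp at G1'
  have hbj : mkq ((C 0 1).imJ) ((C 0 1).imK) * quatJ = C 0 1 := by
    apply Quaternion.ext <;>
      · simp only [Quaternion.re_mul, Quaternion.imI_mul, Quaternion.imJ_mul, Quaternion.imK_mul,
          mkq_re, mkq_imI, mkq_imJ, mkq_imK, quatJ_re, quatJ_imI, quatJ_imJ, quatJ_imK,
          hpre, hpI]
        ring
  have hsb : star (mkq ((C 0 1).imJ) ((C 0 1).imK)) * C 1 0 = quatJ := by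
    rw [mkq_star]
    apply Quaternion.ext <;>
      · simp only [Quaternion.re_mul, Quaternion.imI_mul, Quaternion.imJ_mul, Quaternion.imK_mul,
          mkq_re, mkq_imI, mkq_imJ, mkq_imK, quatJ_re, quatJ_imI, quatJ_imJ, quatJ_imK,
          hqre, hqI]
        first
          | linear_combination G1'
          | linear_combination G2'
          | linear_combination -G2'
          | ring
  have hsbne : star (mkq ((C 0 1).imJ) ((C 0 1).imK)) ≠ 0 := star_ne_zero.mpr hbne
  have hq10 : C 1 0 = (star (mkq ((C 0 1).imJ) ((C 0 1).imK)))⁻¹ * quatJ := by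
    rw [← hsb, inv_mul_cancel_left₀ hsbne]
  have hpq : C 0 1 * C 1 0 = -1 := by
    apply Quaternion.ext <;>
      · simp only [Quaternion.re_mul, Quaternion.imI_mul, Quaternion.imJ_mul, Quaternion.imK_mul,
          Quaternion.re_neg, Quaternion.imI_neg, Quaternion.imJ_neg, Quaternion.imK_neg,
          Quaternion.re_one, Quaternion.imI_one, Quaternion.imJ_one, Quaternion.imK_one,
          hpre, hpI, hqre, hqI]
        first
          | linear_combination -G1'
          | linear_combination G2'
          | linear_combination -G2'
          | ring
  have hqp : C 1 0 * C 0 1 = -1 := by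
    apply Quaternion.ext <;>
      · simp only [Quaternion.re_mul, Quaternion.imI_mul, Quaternion.imJ_mul, Quaternion.imK_mul,
          Quaternion.re_neg, Quaternion.imI_neg, Quaternion.imJ_neg, Quaternion.imK_neg,
          Quaternion.re_one, Quaternion.imI_one, Quaternion.imJ_one, Quaternion.imK_one,
          hpre, hpI, hqre, hqI]
        first
          | linear_combination -G1'
          | linear_combination G2'
          | linear_combination -G2'
          | ring
  refine ⟨mkq ((C 0 1).imJ) ((C 0 1).imK), rfl, rfl, hbne, ?_, ?_⟩
  · rw [← Matrix.ext_iff]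
    intro i j
    fin_cases i <;> fin_cases j <;> simp [hC00, hC11, hbj, hq10]
  · rw [← Matrix.ext_iff]
    intro i j
    fin_cases i <;> fin_cases j <;>
      simp [Matrix.mul_apply, Fin.sum_univ_two, hC00, hC11, hpq, hqp, Matrix.one_apply]
end
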